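/- Let H be a real inner product space, c : H → H a linear map, X_h a finite-dimensional subspace of H, Y_h ⊆ X_h a subspace, and C > 0 a constant with ‖v‖ ≤ C‖c v‖ for all v ∈ Y_h. Let 𝒱_h = {(v, ψ) ∈ Y_h × X_h : ⟨c v, c μ⟩ = ⟨ψ, μ⟩ for all μ ∈ X_h}. Suppose u, φ, f ∈ H satisfy ⟨c φ, c w⟩ = ⟨f, w⟩ for all w ∈ Y_h, and (u_h, φ_h) ∈ 𝒱_h satisfies ⟨φ_h, ψ⟩ = ⟨f, v⟩ for all (v, ψ) ∈ 𝒱_h. Then for every (v_h, ψ_h) ∈ 𝒱_h and every μ_h ∈ X_h, ‖φ_h − ψ_h‖ ≤ max(C, 1)·(‖φ − μ_h‖ + ‖c(φ − μ_h)‖) + ‖φ − ψ_h‖. -/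

import Mathlib

open scoped RealInnerProductSpace

/-- Membership in the discrete constrained space `𝒱_h` for the mixed quad-curl method. -/
def inVh {H : Type*} [NormedAddCommGroup H] [InnerProductSpace ℝ H]
    (c : H →ₗ[ℝ] H) (Xh Yh : Submodule ℝ H) (v ψ : H) : Prop :=
  v ∈ Yh ∧ ψ ∈ Xh ∧ ∀ μ ∈ Xh, ⟪c v, c μ⟫ = ⟪ψ, μ⟫

/-!
Write `e = φ_h − ψ_h`, `w = u_h − v_h` and `K = max C 1`, which also satisfies the Friedrichs
inequality; then `(w, e) ∈ 𝒱_h`. Testing the constraint with `μ = w` gives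
`‖c w‖² = ⟪e, w⟫ ≤ ‖e‖ ‖w‖ ≤ K ‖e‖ ‖c w‖`, so `‖c w‖ ≤ K ‖e‖`. Testing the discrete
equation with `(w, e)`, the exact equation with `w` and the constraint with `μ_h` gives the error
identity `‖e‖² = ⟪c(φ − μ_h), c w⟫ + ⟪e, μ_h − φ⟫ + ⟪e, φ − ψ_h⟫`, and Cauchy–Schwarz bounds the
right-hand side by `‖e‖ (K ‖c(φ − μ_h)‖ + ‖φ − μ_h‖ + ‖φ − ψ_h‖)`.
-/

lemma le_of_sq_le_mul {a b : ℝ} (ha : 0 ≤ a) (hb : 0 ≤ b) (h : a ^ 2 ≤ a * b) : a ≤ b := by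
  rcases ha.eq_or_lt with rfl | hpos
  · exact hb
  · exact le_of_mul_le_mul_left (by rwa [sq] at h) hpos

section MixedMethod

variable {H : Type*} [NormedAddCommGroup H] [InnerProductSpace ℝ H]
  {c : H →ₗ[ℝ] H} {Xh Yh : Submodule ℝ H}

lemma inVh.sub {v ψ v' ψ' : H} (h : inVh c Xh Yh v ψ) (h' : inVh c Xh Yh v' ψ') :
    inVh c Xh Yh (v - v') (ψ - ψ') := by
  refine ⟨sub_mem h.1 h'.1, sub_mem h.2.1 h'.2.1, fun μ hμ => ?_⟩
  rw [map_sub, inner_sub_left, inner_sub_left, h.2.2 μ hμ, h'.2.2 μ hμ]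

lemma inVh.norm_map_le (hYX : Yh ≤ Xh) {K : ℝ} (hK : 0 ≤ K)
    (hFried : ∀ v ∈ Yh, ‖v‖ ≤ K * ‖c v‖) {v ψ : H} (h : inVh c Xh Yh v ψ) :
    ‖c v‖ ≤ K * ‖ψ‖ := by
  refine le_of_sq_le_mul (norm_nonneg _) (by positivity) ?_
  calc ‖c v‖ ^ 2 = ⟪ψ, v⟫ := by rw [← real_inner_self_eq_norm_sq, h.2.2 v (hYX h.1)]
    _ ≤ ‖ψ‖ * ‖v‖ := real_inner_le_norm ψ v
    _ ≤ ‖ψ‖ * (K * ‖c v‖) := by gcongr; exact hFried v h.1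
    _ = ‖c v‖ * (K * ‖ψ‖) := by ring

lemma inner_self_sub_eq_of_inVh {f φ φh ψh uh vh μh : H}
    (hexact : ∀ w ∈ Yh, ⟪c φ, c w⟫ = ⟪f, w⟫)
    (hdisc : ∀ v ψ : H, inVh c Xh Yh v ψ → ⟪φh, ψ⟫ = ⟪f, v⟫)
    (hVw : inVh c Xh Yh (uh - vh) (φh - ψh)) (hμ : μh ∈ Xh) :
    ⟪φh - ψh, φh - ψh⟫ = ⟪c (φ - μh), c (uh - vh)⟫ + ⟪φh - ψh, μh - φ⟫
      + ⟪φh - ψh, φ - ψh⟫ := by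
  have hφ : ⟪c φ, c (uh - vh)⟫ = ⟪φh, φh - ψh⟫ := by
    rw [hexact _ hVw.1, hdisc _ _ hVw]
  have hμh : ⟪c μh, c (uh - vh)⟫ = ⟪φh - ψh, μh⟫ := by
    rw [real_inner_comm, hVw.2.2 μh hμ]
  rw [map_sub c φ μh, inner_sub_left (c φ), hφ, hμh]
  simp only [inner_sub_left, inner_sub_right, real_inner_comm ψh]
  ring

lemma norm_sub_le_of_inVh (hYX : Yh ≤ Xh) {K : ℝ} (hK : 0 ≤ K)
    (hFried : ∀ v ∈ Yh, ‖v‖ ≤ K * ‖c v‖) {f φ φh ψh uh vh μh : H}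
    (hexact : ∀ w ∈ Yh, ⟪c φ, c w⟫ = ⟪f, w⟫)
    (hdisc : ∀ v ψ : H, inVh c Xh Yh v ψ → ⟪φh, ψ⟫ = ⟪f, v⟫)
    (hVw : inVh c Xh Yh (uh - vh) (φh - ψh)) (hμ : μh ∈ Xh) :
    ‖φh - ψh‖ ≤ K * ‖c (φ - μh)‖ + ‖φ - μh‖ + ‖φ - ψh‖ := by
  set e := φh - ψh
  refine le_of_sq_le_mul (norm_nonneg e) (by positivity) ?_
  have hcw : ‖c (uh - vh)‖ ≤ K * ‖e‖ := hVw.norm_map_le hYX hK hFried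
  calc ‖e‖ ^ 2 = ⟪c (φ - μh), c (uh - vh)⟫ + ⟪e, μh - φ⟫ + ⟪e, φ - ψh⟫ := by
        rw [← real_inner_self_eq_norm_sq, inner_self_sub_eq_of_inVh hexact hdisc hVw hμ]
    _ ≤ ‖c (φ - μh)‖ * ‖c (uh - vh)‖ + ‖e‖ * ‖μh - φ‖ + ‖e‖ * ‖φ - ψh‖ := by
        gcongr <;> exact real_inner_le_norm _ _
    _ ≤ ‖c (φ - μh)‖ * (K * ‖e‖) + ‖e‖ * ‖φ - μh‖ + ‖e‖ * ‖φ - ψh‖ := by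
        rw [norm_sub_rev μh φ]; gcongr
    _ = ‖e‖ * (K * ‖c (φ - μh)‖ + ‖φ - μh‖ + ‖φ - ψh‖) := by ring

end MixedMethod

theorem stmt8_general {H : Type*} [NormedAddCommGroup H] [InnerProductSpace ℝ H]
    (c : H →ₗ[ℝ] H) (Xh Yh : Submodule ℝ H)
    (hYX : Yh ≤ Xh) (C : ℝ)
    (hFried : ∀ v ∈ Yh, ‖v‖ ≤ C * ‖c v‖)
    (φ f : H)
    (hexact : ∀ w ∈ Yh, ⟪c φ, c w⟫ = ⟪f, w⟫)
    (uh φh : H) (hmem : inVh c Xh Yh uh φh)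
    (hdisc : ∀ v ψ : H, inVh c Xh Yh v ψ → ⟪φh, ψ⟫ = ⟪f, v⟫) :
    ∀ vh ψh : H, inVh c Xh Yh vh ψh → ∀ μh ∈ Xh,
      ‖φh - ψh‖ ≤ max C 1 * (‖φ - μh‖ + ‖c (φ - μh)‖) + ‖φ - ψh‖ := by
  intro vh ψh hVh μh hμ
  have hK : 0 ≤ max C 1 := zero_le_one.trans (le_max_right C 1)
  have hFried' : ∀ v ∈ Yh, ‖v‖ ≤ max C 1 * ‖c v‖ := fun v hv =>
    (hFried v hv).trans (by gcongr; exact le_max_left C 1)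
  calc ‖φh - ψh‖ ≤ max C 1 * ‖c (φ - μh)‖ + ‖φ - μh‖ + ‖φ - ψh‖ :=
        norm_sub_le_of_inVh hYX hK hFried' hexact hdisc (hmem.sub hVh) hμ
    _ ≤ max C 1 * (‖φ - μh‖ + ‖c (φ - μh)‖) + ‖φ - ψh‖ := by
        have hμK : ‖φ - μh‖ ≤ max C 1 * ‖φ - μh‖ :=
          le_mul_of_one_le_left (norm_nonneg _) (le_max_right C 1)
        linarith

/-- Intermediate bound in the quasi-optimality proof of the mixed method:
`‖φ_h − ψ_h‖ ≤ max(C,1)(‖φ − μ_h‖ + ‖c(φ − μ_h)‖) + ‖φ − ψ_h‖`. -/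
theorem stmt8 {H : Type*} [NormedAddCommGroup H] [InnerProductSpace ℝ H]
    (c : H →ₗ[ℝ] H) (Xh Yh : Submodule ℝ H) [FiniteDimensional ℝ Xh]
    (hYX : Yh ≤ Xh) (C : ℝ) (hC : 0 < C)
    (hFried : ∀ v ∈ Yh, ‖v‖ ≤ C * ‖c v‖)
    (u φ f : H)
    (hexact : ∀ w ∈ Yh, ⟪c φ, c w⟫ = ⟪f, w⟫)
    (uh φh : H) (hmem : inVh c Xh Yh uh φh)
    (hdisc : ∀ v ψ : H, inVh c Xh Yh v ψ → ⟪φh, ψ⟫ = ⟪f, v⟫) :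
    ∀ vh ψh : H, inVh c Xh Yh vh ψh → ∀ μh ∈ Xh,
      ‖φh - ψh‖ ≤ max C 1 * (‖φ - μh‖ + ‖c (φ - μh)‖) + ‖φ - ψh‖ :=
  stmt8_general c Xh Yh hYX C hFried φ f hexact uh φh hmem hdisc
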